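/- Define J₀ : ℝ → ℝ by J₀(x) = ∫₀¹ cos(x·cos(2πs)) ds. Then for all x, y with 0 ≤ x ≤ y ≤ 2.4: J₀(x) − J₀(y) ≥ (y − x)²/16. Consequently, for all x, y ∈ [0, 2.4]: |x − y| ≤ 4·|J₀(x) − J₀(y)|^{1/2}; that is, the inverse of the restriction of J₀ to [0, 2.4] is ½-Hölder with constant 4. -/

import Mathlib

/-!
For `|c| ≤ 1` and `0 ≤ x ≤ y ≤ 2.4`, `cos (x c) - cos (y c) = ∫ sin` over `[x|c|, y|c|]`, and
`sin t ≥ t / 4` on `[0, 2.4]` (the chord of the concave `sin` from `0` to `2.4`, as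
`sin 2.4 > 0.6`), so the difference is at least `(y² - x²) c² / 8 ≥ (y - x)² c² / 8`.
Taking `c = cos (2πs)`, whose square has mean `1/2`, and integrating gives the first bound;
the Hölder estimate is its square root.
-/

noncomputable section

/-- The Bessel function of the first kind of order `0`. -/
noncomputable def J0 (x : ℝ) : ℝ :=
  ∫ s in (0:ℝ)..1, Real.cos (x * Real.cos (2 * Real.pi * s))

open Real intervalIntegral

lemma three_fifths_le_sin_two_point_four : (0.6 : ℝ) ≤ sin 2.4 := by
  have hu₀ : 0 < π - 2.4 := by linarith [pi_gt_three]
  have hu : π - 2.4 ≤ 0.75 := by linarith [pi_lt_d2]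
  have hcube : (π - 2.4) ^ 3 ≤ 0.75 ^ 3 := by gcongr
  have hsin := sin_gt_sub_cube hu₀
  rw [sin_pi_sub] at hsin
  linarith [pi_gt_d2]

lemma div_four_le_sin {t : ℝ} (ht₀ : 0 ≤ t) (ht : t ≤ 2.4) : t / 4 ≤ sin t := by
  have hmem : (2.4 : ℝ) ∈ Set.Icc 0 π := ⟨by norm_num, by linarith [pi_gt_three]⟩
  have hchord := strictConcaveOn_sin_Icc.concaveOn.2 (Set.left_mem_Icc.2 pi_pos.le) hmem
    (sub_nonneg.2 <| (div_le_one (by norm_num)).2 ht)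
    (show 0 ≤ t / (2.4 : ℝ) from div_nonneg ht₀ (by norm_num)) (by ring)
  rw [smul_zero, zero_add, sin_zero, smul_zero, zero_add, smul_eq_mul, smul_eq_mul,
    div_mul_cancel₀ t (by norm_num)] at hchord
  calc t / 4 = t / 2.4 * 0.6 := by norm_num; ring
    _ ≤ t / 2.4 * sin 2.4 := by gcongr; exact three_fifths_le_sin_two_point_four
    _ ≤ sin t := hchord

lemma sq_sub_sq_div_eight_le_cos_sub_cos {a b : ℝ} (ha : 0 ≤ a) (hab : a ≤ b) (hb : b ≤ 2.4) :
    (b ^ 2 - a ^ 2) / 8 ≤ cos a - cos b := by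
  calc (b ^ 2 - a ^ 2) / 8 = ∫ t in a..b, t / 4 := by
        rw [intervalIntegral.integral_div, integral_id]; ring
    _ ≤ ∫ t in a..b, sin t := by
        refine integral_mono_on hab (Continuous.intervalIntegrable (by fun_prop) _ _)
          (Continuous.intervalIntegrable (by fun_prop) _ _) fun t ht => ?_
        exact div_four_le_sin (ha.trans ht.1) (ht.2.trans hb)
    _ = cos a - cos b := integral_sin

lemma sq_mul_sq_div_eight_le_cos_sub_cos {x y c : ℝ} (hx : 0 ≤ x) (hxy : x ≤ y) (hy : y ≤ 2.4)
    (hc : |c| ≤ 1) : (y - x) ^ 2 * c ^ 2 / 8 ≤ cos (x * c) - cos (y * c) := by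
  have hcos : ∀ z, 0 ≤ z → cos (z * c) = cos (z * |c|) := fun z hz => by
    rw [← cos_abs, abs_mul, abs_of_nonneg hz]
  rw [hcos x hx, hcos y (hx.trans hxy)]
  have h := sq_sub_sq_div_eight_le_cos_sub_cos (a := x * |c|) (b := y * |c|)
    (by positivity) (by gcongr) (by nlinarith [abs_nonneg c])
  have hsq : (y * |c|) ^ 2 - (x * |c|) ^ 2 = (y - x) ^ 2 * c ^ 2 + 2 * x * (y - x) * c ^ 2 := by
    rw [mul_pow, mul_pow, sq_abs]; ring
  rw [hsq] at h
  nlinarith [mul_nonneg (mul_nonneg hx (sub_nonneg.2 hxy)) (sq_nonneg c)]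

lemma integral_cos_two_pi_mul_sq : ∫ s in (0:ℝ)..1, cos (2 * π * s) ^ 2 = 1 / 2 := by
  rw [intervalIntegral.integral_comp_mul_left (fun u => cos u ^ 2) (by positivity),
    integral_cos_sq, mul_one, mul_zero, sin_two_pi, sin_zero, smul_eq_mul]
  field_simp
  ring

lemma J0_sub_J0_ge {x y : ℝ} (hx : 0 ≤ x) (hxy : x ≤ y) (hy : y ≤ 2.4) :
    (y - x) ^ 2 / 16 ≤ J0 x - J0 y := by
  calc (y - x) ^ 2 / 16 = ∫ s in (0:ℝ)..1, (y - x) ^ 2 * cos (2 * π * s) ^ 2 / 8 := by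
        rw [intervalIntegral.integral_div, intervalIntegral.integral_const_mul,
          integral_cos_two_pi_mul_sq]; ring
    _ ≤ ∫ s in (0:ℝ)..1, (cos (x * cos (2 * π * s)) - cos (y * cos (2 * π * s))) :=
        integral_mono_on zero_le_one (Continuous.intervalIntegrable (by fun_prop) _ _)
          (Continuous.intervalIntegrable (by fun_prop) _ _) fun s _ =>
          sq_mul_sq_div_eight_le_cos_sub_cos hx hxy hy (abs_cos_le_one _)
    _ = J0 x - J0 y := integral_sub (Continuous.intervalIntegrable (by fun_prop) _ _)
          (Continuous.intervalIntegrable (by fun_prop) _ _)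

lemma sq_sub_div_sixteen_le_abs_J0_sub {x y : ℝ} (hx : x ∈ Set.Icc (0:ℝ) 2.4)
    (hy : y ∈ Set.Icc (0:ℝ) 2.4) : (x - y) ^ 2 / 16 ≤ |J0 x - J0 y| := by
  rcases le_total x y with hxy | hyx
  · rw [← neg_sub y x, neg_sq]
    exact (J0_sub_J0_ge hx.1 hxy hy.2).trans (le_abs_self _)
  · rw [abs_sub_comm]
    exact (J0_sub_J0_ge hy.1 hyx hx.2).trans (le_abs_self _)

/-- `J₀(x) − J₀(y) ≥ (y−x)²/16` for `0 ≤ x ≤ y ≤ 2.4`; consequently the inverse of the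
restriction of `J₀` to `[0, 2.4]` is `½`-Hölder with constant `4`. -/
theorem stmt15 :
    (∀ x y : ℝ, 0 ≤ x → x ≤ y → y ≤ 2.4 → (y - x) ^ 2 / 16 ≤ J0 x - J0 y) ∧
    (∀ x y : ℝ, x ∈ Set.Icc (0:ℝ) 2.4 → y ∈ Set.Icc (0:ℝ) 2.4 →
      |x - y| ≤ 4 * Real.sqrt |J0 x - J0 y|) := by
  refine ⟨fun x y hx hxy hy => J0_sub_J0_ge hx hxy hy, fun x y hx hy => ?_⟩
  have h : |(x - y) / 4| ≤ √|J0 x - J0 y| :=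
    abs_le_sqrt (by linarith [div_pow (x - y) 4 2, sq_sub_div_sixteen_le_abs_J0_sub hx hy])
  rw [abs_div, abs_of_pos (by norm_num : (0:ℝ) < 4)] at h
  linarith
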